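/- arXiv:1801.00581 — 2 statements merged into one kernel-verified Lean document; each statement's English description precedes it below -/
import Mathlib

section
/- Let (G,·,D,⋆) be a probabilistic invariant metric group with ⋆ continuous (and sup-continuous). Then (Π(G), ⊙, 𝔻, ⋆) is a probabilistic invariant complete metric group with identity δ_e: Π(G) is closed under ⊙, every element of Π(G) has a ⊙-inverse in Π(G), and 𝔻(f⊙h, g⊙h) = 𝔻(h⊙f, h⊙g) = 𝔻(f,g). -/
open Filter Topology Set

/-- A (real-domain representation of a) distribution function in Δ⁺ :
nondecreasing, with values in [0,1], left-continuous, vanishing on (-∞,0]. -/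
def MemDP (f : ℝ → ℝ) : Prop :=
  Monotone f ∧ (∀ t, 0 ≤ f t) ∧ (∀ t, f t ≤ 1) ∧
  (∀ t : ℝ, Tendsto f (nhdsWithin t (Set.Iio t)) (nhds (f t))) ∧
  (∀ t ≤ (0:ℝ), f t = 0)

/-- The distribution H₀. -/
noncomputable def H0 : ℝ → ℝ := fun t => if 0 < t then 1 else 0

/-- The distribution H_∞ (zero at every finite point). -/
def Hinf : ℝ → ℝ := fun _ => 0

/-- Pointwise order on distribution functions. -/
def dpLE (f g : ℝ → ℝ) : Prop := ∀ t, f t ≤ g t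

/-- Triangle function on Δ⁺. -/
structure IsTriangle (star : (ℝ → ℝ) → (ℝ → ℝ) → (ℝ → ℝ)) : Prop where
  mem : ∀ f g, MemDP f → MemDP g → MemDP (star f g)
  comm : ∀ f g, MemDP f → MemDP g → star f g = star g f
  assoc : ∀ f g h, MemDP f → MemDP g → MemDP h →
    star f (star g h) = star (star f g) h
  ident : ∀ f, MemDP f → star f H0 = f
  mono : ∀ f g h, MemDP f → MemDP g → MemDP h → dpLE f g → dpLE (star f h) (star g h)

/-- Sup-continuity of a triangle function (suprema in Δ⁺ are pointwise). -/
def SupCont (star : (ℝ → ℝ) → (ℝ → ℝ) → (ℝ → ℝ)) : Prop :=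
  ∀ (I : Type) (_ : Nonempty I) (F : I → ℝ → ℝ) (L : ℝ → ℝ),
    (∀ i, MemDP (F i)) → MemDP L →
    ∀ t, (⨆ i, star (F i) L t) = star (fun s => ⨆ i, F i s) L t

/-- Weak convergence in Δ⁺: pointwise convergence at each continuity point of the limit. -/
def WConv (Fn : ℕ → ℝ → ℝ) (F : ℝ → ℝ) : Prop :=
  ∀ t, ContinuousAt F t → Tendsto (fun n => Fn n t) atTop (nhds (F t))

/-- Continuity of a triangle function w.r.t. weak convergence. -/
def StarCont (star : (ℝ → ℝ) → (ℝ → ℝ) → (ℝ → ℝ)) : Prop :=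
  ∀ (Fn Ln : ℕ → ℝ → ℝ) (F L : ℝ → ℝ),
    (∀ n, MemDP (Fn n)) → (∀ n, MemDP (Ln n)) → MemDP F → MemDP L →
    WConv Fn F → WConv Ln L → WConv (fun n => star (Fn n) (Ln n)) (star F L)

/-- Probabilistic metric space (G, D, ⋆). -/
structure IsPMS {G : Type} (D : G → G → ℝ → ℝ)
    (star : (ℝ → ℝ) → (ℝ → ℝ) → (ℝ → ℝ)) : Prop where
  tri : IsTriangle star
  mem : ∀ p q, MemDP (D p q)
  eq_iff : ∀ p q, D p q = H0 ↔ p = q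
  symm : ∀ p q, D p q = D q p
  triangle_ineq : ∀ p q r, dpLE (star (D p q) (D q r)) (D p r)

/-- Probabilistic invariant metric group. -/
structure IsPIMG {G : Type} [Group G] (D : G → G → ℝ → ℝ)
    (star : (ℝ → ℝ) → (ℝ → ℝ) → (ℝ → ℝ)) extends IsPMS D star : Prop where
  invL : ∀ p q r : G, D (r * p) (r * q) = D p q
  invR : ∀ p q r : G, D (p * r) (q * r) = D p q

/-- Probabilistic 1-Lipschitz map. -/
def Lip1 {G : Type} (D : G → G → ℝ → ℝ) (star : (ℝ → ℝ) → (ℝ → ℝ) → (ℝ → ℝ))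
    (f : G → ℝ → ℝ) : Prop :=
  (∀ x, MemDP (f x)) ∧ ∀ x y, dpLE (star (D x y) (f y)) (f x)

/-- δ_a(y) = D(y,a). -/
def dlt {G : Type} (D : G → G → ℝ → ℝ) (a : G) : G → ℝ → ℝ := fun y => D y a

/-- Sup-convolution (f ⊙ g)(x) = sup_{yz = x} f(y) ⋆ g(z), pointwise. -/
noncomputable def sconv {G : Type} [Group G] (star : (ℝ → ℝ) → (ℝ → ℝ) → (ℝ → ℝ))
    (f g : G → ℝ → ℝ) : G → ℝ → ℝ :=
  fun x t => ⨆ y : G, star (f (x * y⁻¹)) (g y) t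

/-- Cauchy sequence for a probabilistic metric: D(a_n, a_p) → H₀ weakly. -/
def PCauchy {G : Type} (D : G → G → ℝ → ℝ) (a : ℕ → G) : Prop :=
  ∀ t > (0:ℝ), ∀ ε > (0:ℝ), ∃ N, ∀ n ≥ N, ∀ p ≥ N, 1 - ε ≤ D (a n) (a p) t

/-- Π(G): probabilistic 1-Lipschitz maps that are pointwise weak limits of δ_{a_n}
for some Cauchy sequence (a_n). -/
def InPi {G : Type} (D : G → G → ℝ → ℝ) (star : (ℝ → ℝ) → (ℝ → ℝ) → (ℝ → ℝ))
    (f : G → ℝ → ℝ) : Prop :=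
  Lip1 D star f ∧ ∃ a : ℕ → G, PCauchy D a ∧ ∀ x, WConv (fun n => D (a n) x) (f x)

/-- 𝔻(f,g) = sup_{x∈G} f(x) ⋆ g(x), pointwise. -/
noncomputable def DD {G : Type} (star : (ℝ → ℝ) → (ℝ → ℝ) → (ℝ → ℝ))
    (f g : G → ℝ → ℝ) : ℝ → ℝ :=
  fun t => ⨆ x : G, star (f x) (g x) t

/-- t-norm on [0,1]. -/
structure IsTnorm (T : ℝ → ℝ → ℝ) : Prop where
  mem : ∀ x ∈ Set.Icc (0:ℝ) 1, ∀ y ∈ Set.Icc (0:ℝ) 1, T x y ∈ Set.Icc (0:ℝ) 1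
  comm : ∀ x y, T x y = T y x
  assoc : ∀ x y z, T x (T y z) = T (T x y) z
  mono : ∀ x y z, y ≤ z → T x y ≤ T x z
  one : ∀ x ∈ Set.Icc (0:ℝ) 1, T x 1 = x

/-- Left-continuity of a t-norm (in each variable; by commutativity one suffices). -/
def LeftCtsTnorm (T : ℝ → ℝ → ℝ) : Prop :=
  ∀ y x : ℝ, Tendsto (fun s => T s y) (nhdsWithin x (Set.Iio x)) (nhds (T x y))

/-- The triangle function ⋆_T : (F ⋆_T L)(t) = sup_{s+u=t} T(F(s), L(u)). -/
noncomputable def starT (T : ℝ → ℝ → ℝ) (f g : ℝ → ℝ) : ℝ → ℝ :=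
  fun t => ⨆ s : ℝ, T (f s) (g (t - s))

/-!
Every element of `Π(G)` is the weak limit of `dlt D (a n)` along a Cauchy sequence `a`, and
conversely along every Cauchy sequence `D (a n) x` converges weakly, to the left-continuous
regularisation of its pointwise `liminf`: the Cauchy property and the uniform continuity of `star`
at `H0` make the sequence almost increasing. The convolution of the limits along `a` and `b` is
the limit along `a n * b n`; this gives closure under `⊙`, the identity `dlt D 1`, and inverses
(the limit along `(a n)⁻¹`).

For the invariance of `𝔻`, sup-continuity of `star` reduces `≤` to a pointwise estimate in which
the factor `k y ⋆ k z ≤ D y z` lets the 1-Lipschitz `g` move back to the diagonal; for `≥` one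
evaluates the convolutions at `x * c n`, where `k (c n) → H0`. For completeness one picks `b n`
with `dlt D (b n)` close to `F n` in `𝔻`; the triangle inequality for `𝔻` makes `b` Cauchy, and
the limit along `b` is the limit of `F`.
-/

theorem Monotone.exists_continuousAt_mem_Ioo {g : ℝ → ℝ} (hg : Monotone g) {a b : ℝ}
    (hab : a < b) : ∃ v ∈ Ioo a b, ContinuousAt g v := by
  obtain ⟨v, hv, hav, hvb⟩ := (hg.countable_not_continuousAt.dense_compl ℝ).exists_between hab
  exact ⟨v, ⟨hav, hvb⟩, not_not.1 hv⟩

namespace MemDP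

variable {φ ψ : ℝ → ℝ}

theorem monotone (h : MemDP φ) : Monotone φ := h.1

theorem nonneg (h : MemDP φ) (t : ℝ) : 0 ≤ φ t := h.2.1 t

theorem le_one (h : MemDP φ) (t : ℝ) : φ t ≤ 1 := h.2.2.1 t

theorem tendsto_nhdsLT (h : MemDP φ) (t : ℝ) : Tendsto φ (𝓝[<] t) (𝓝 (φ t)) := h.2.2.2.1 t

theorem eq_zero (h : MemDP φ) {t : ℝ} (ht : t ≤ 0) : φ t = 0 := h.2.2.2.2 t ht

theorem of_exists_lt (hm : Monotone φ) (h0 : ∀ t, 0 ≤ φ t) (h1 : ∀ t, φ t ≤ 1)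
    (hz : ∀ t ≤ (0 : ℝ), φ t = 0) (hlc : ∀ t, ∀ ε > (0 : ℝ), ∃ s < t, φ t - ε ≤ φ s) :
    MemDP φ := by
  refine ⟨hm, h0, h1, fun t => ?_, hz⟩
  refine tendsto_order.2 ⟨fun b hb => ?_, fun b hb => ?_⟩
  · obtain ⟨s, hst, hs⟩ := hlc t ((φ t - b) / 2) (by linarith)
    filter_upwards [Ioo_mem_nhdsLT hst] with u hu
    linarith [hm hu.1.le]
  · filter_upwards [self_mem_nhdsWithin] with u (hu : u < t)
    exact (hm hu.le).trans_lt hb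

theorem exists_sub_le (h : MemDP φ) (t : ℝ) {ε : ℝ} (hε : 0 < ε) : ∃ s < t, φ t - ε ≤ φ s := by
  obtain ⟨s, hs, hst⟩ :=
    ((h.tendsto_nhdsLT t).eventually (eventually_gt_nhds (sub_lt_self _ hε))).and
      self_mem_nhdsWithin |>.exists
  exact ⟨s, hst, hs.le⟩

theorem dpLE_of_countable (h : MemDP φ) (hψ : Monotone ψ) {S : Set ℝ} (hS : S.Countable)
    (hle : ∀ s ∉ S, φ s ≤ ψ s) : dpLE φ ψ := by
  intro t
  refine le_of_forall_pos_le_add fun ε hε => ?_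
  obtain ⟨s, hst, hs⟩ := h.exists_sub_le t hε
  obtain ⟨v, hvS, hsv, hvt⟩ := (hS.dense_compl ℝ).exists_between hst
  linarith [h.monotone hsv.le, hle v hvS, hψ hvt.le]

theorem iSup {ι : Sort*} [Nonempty ι] {F : ι → ℝ → ℝ} (h : ∀ i, MemDP (F i)) :
    MemDP fun t => ⨆ i, F i t := by
  have hb t : BddAbove (range fun i => F i t) := ⟨1, forall_mem_range.2 fun i => (h i).le_one t⟩
  refine of_exists_lt (fun s t hst => ciSup_mono (hb t) fun i => (h i).monotone hst)
    (fun t => (le_ciSup (hb t) (Classical.arbitrary ι)).trans' ((h _).nonneg t))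
    (fun t => ciSup_le fun i => (h i).le_one t)
    (fun t ht => by simp only [(h _).eq_zero ht, ciSup_const]) fun t ε hε => ?_
  obtain ⟨i, hi⟩ := exists_lt_of_lt_ciSup (sub_lt_self (⨆ i, F i t) (half_pos hε))
  obtain ⟨s, hst, hs⟩ := (h i).exists_sub_le t (half_pos hε)
  exact ⟨s, hst, by linarith [le_ciSup (hb s) i]⟩

theorem leftLim {g : ℝ → ℝ} (hg : Monotone g) (h0 : ∀ t, 0 ≤ g t) (h1 : ∀ t, g t ≤ 1)
    (hz : ∀ t ≤ (0 : ℝ), g t = 0) : MemDP (Function.leftLim g) := by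
  have hnonneg t : 0 ≤ Function.leftLim g t := (h0 (t - 1)).trans (hg.le_leftLim (by linarith))
  refine ⟨hg.leftLim, hnonneg, fun t => (hg.leftLim_le le_rfl).trans (h1 t), fun t => ?_,
    fun t ht => le_antisymm ((hg.leftLim_le le_rfl).trans (hz t ht).le) (hnonneg t)⟩
  exact ((continuousWithinAt_leftLim_Iic (hg.tendsto_leftLim t)).mono Iio_subset_Iic_self).tendsto

end MemDP

noncomputable def stepDP (c s : ℝ) : ℝ → ℝ := fun u => if s < u then c else 0

theorem memDP_stepDP {c s : ℝ} (hc0 : 0 ≤ c) (hc1 : c ≤ 1) (hs : 0 ≤ s) :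
    MemDP (stepDP c s) := by
  refine MemDP.of_exists_lt (fun u v huv => ?_) (fun t => ?_) (fun t => ?_)
    (fun t ht => if_neg (by linarith)) fun t ε hε => ?_
  · by_cases h : s < u
    · simp [stepDP, h, h.trans_le huv]
    · simp only [stepDP, h, if_false]; split <;> linarith
  · unfold stepDP; split <;> linarith
  · unfold stepDP; split <;> linarith
  · by_cases h : s < t
    · exact ⟨(s + t) / 2, by linarith, by simp [stepDP, h, show s < (s + t) / 2 by linarith, hε.le]⟩
    · exact ⟨t - 1, by linarith, by simp [stepDP, h, show ¬ s < t - 1 by linarith, hε.le]⟩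

theorem continuousAt_stepDP {c s t : ℝ} (h : s < t) : ContinuousAt (stepDP c s) t :=
  continuousAt_const.congr <| by
    filter_upwards [lt_mem_nhds h] with u hu using (if_pos hu).symm

theorem memDP_H0 : MemDP H0 := memDP_stepDP zero_le_one le_rfl le_rfl

section WeakConvergence

variable {φ ψ : ℕ → ℝ → ℝ} {F L : ℝ → ℝ}

theorem wconv_const (F : ℝ → ℝ) : WConv (fun _ => F) F := fun _ _ => tendsto_const_nhds

theorem WConv.dpLE (hφ : WConv φ F) (hψ : WConv ψ L) (hF : MemDP F) (hL : MemDP L)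
    (hle : ∀ n, dpLE (φ n) (ψ n)) : dpLE F L :=
  hF.dpLE_of_countable hL.monotone
    (hF.monotone.countable_not_continuousAt.union hL.monotone.countable_not_continuousAt)
    fun s hs => by
      simp only [mem_union, mem_ofPred_eq, not_or, not_not] at hs
      exact le_of_tendsto_of_tendsto' (hφ s hs.1) (hψ s hs.2) fun n => hle n s

theorem wconv_H0_iff (hφ : ∀ n, MemDP (φ n)) :
    WConv φ H0 ↔ ∀ t > (0 : ℝ), ∀ ε > (0 : ℝ), ∀ᶠ n in atTop, 1 - ε ≤ φ n t := by
  refine ⟨fun h t ht ε hε => ?_, fun h t _ => ?_⟩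
  · have := h t (continuousAt_stepDP ht)
    rw [show H0 t = 1 from if_pos ht] at this
    exact (this.eventually (eventually_gt_nhds (sub_lt_self 1 hε))).mono fun n hn => hn.le
  rcases le_or_gt t 0 with ht | ht
  · simp only [(hφ _).eq_zero ht, H0, if_neg (not_lt.2 ht)]
    exact tendsto_const_nhds
  · rw [show H0 t = 1 from if_pos ht]
    refine tendsto_order.2 ⟨fun b hb => ?_, fun b hb => .of_forall fun n => ?_⟩
    · filter_upwards [h t ht ((1 - b) / 2) (by linarith)] with n hn
      linarith
    · exact ((hφ n).le_one t).trans_lt hb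

theorem wconv_H0_of_le (hψ : ∀ n, MemDP (ψ n)) (hφ : ∀ n, MemDP (φ n)) (hψ0 : WConv ψ H0)
    (hle : ∀ n, dpLE (ψ n) (φ n)) : WConv φ H0 :=
  (wconv_H0_iff hφ).2 fun t ht ε hε =>
    ((wconv_H0_iff hψ).1 hψ0 t ht ε hε).mono fun n hn => hn.trans (hle n t)

theorem wconv_H0_of_one_sub_le (hφ : ∀ n, MemDP (φ n)) {r : ℕ → ℝ}
    (hr : Tendsto r atTop (𝓝 0)) (h : ∀ n, 1 - r n ≤ φ n (r n)) : WConv φ H0 :=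
  (wconv_H0_iff hφ).2 fun t ht ε hε => by
    filter_upwards [hr.eventually (gt_mem_nhds (lt_min ht hε))] with n hn
    linarith [(hφ n).monotone (hn.le.trans (min_le_left t ε)), h n, min_le_right t ε]

end WeakConvergence

namespace IsTriangle

variable {star : (ℝ → ℝ) → (ℝ → ℝ) → (ℝ → ℝ)} (htri : IsTriangle star) {A B C E : ℝ → ℝ}
include htri

theorem star_H0_left (hA : MemDP A) : star H0 A = A := by
  rw [htri.comm H0 A memDP_H0 hA, htri.ident A hA]

theorem star_mono_right (hA : MemDP A) (hB : MemDP B) (hC : MemDP C) (h : dpLE B C) :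
    dpLE (star A B) (star A C) := by
  rw [htri.comm A B hA hB, htri.comm A C hA hC]
  exact htri.mono B C A hB hC hA h

theorem star_mono (hA : MemDP A) (hB : MemDP B) (hC : MemDP C) (hE : MemDP E)
    (hAC : dpLE A C) (hBE : dpLE B E) : dpLE (star A B) (star C E) := fun t =>
  (htri.mono A C B hA hC hB hAC t).trans (htri.star_mono_right hC hB hE hBE t)

theorem star_star_star_comm (hA : MemDP A) (hB : MemDP B) (hC : MemDP C) (hE : MemDP E) :
    star (star A B) (star C E) = star (star A C) (star B E) := by
  rw [← htri.assoc A B _ hA hB (htri.mem C E hC hE), htri.assoc B C E hB hC hE,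
    htri.comm B C hB hC, ← htri.assoc C B E hC hB hE, htri.assoc A C _ hA hC (htri.mem B E hB hE)]

end IsTriangle

theorem wconv_stepDP {c : ℕ → ℝ} {c₀ : ℝ} (hc : Tendsto c atTop (𝓝 c₀)) (s : ℝ) :
    WConv (fun n => stepDP (c n) s) (stepDP c₀ s) := fun u _ => by
  by_cases h : s < u
  · simpa only [stepDP, if_pos h] using hc
  · simpa only [stepDP, if_neg h] using tendsto_const_nhds

namespace StarCont

variable {star : (ℝ → ℝ) → (ℝ → ℝ) → (ℝ → ℝ)} (hc : StarCont star) (htri : IsTriangle star)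
  {φ ρ : ℕ → ℝ → ℝ} {F L : ℝ → ℝ}
include hc htri

/-- Uniform continuity of `star` at `H0`. It follows from sequential continuity by compactness
of `[0, 1]`, testing against the step functions `stepDP (L s) s ≤ L`. -/
theorem exists_sub_le_star {s t ε : ℝ} (hs : 0 ≤ s) (hst : s < t)
    (hε : 0 < ε) : ∃ δ > (0 : ℝ), ∃ η > (0 : ℝ), ∀ F L, MemDP F → MemDP L → 1 - δ ≤ F η →
      L s - ε ≤ star F L t := by
  by_contra! hcon
  choose F L hF hL hFH0 hbad using fun n : ℕ =>
    hcon (1 / (n + 1 : ℝ)) Nat.one_div_pos_of_nat (1 / (n + 1 : ℝ)) Nat.one_div_pos_of_nat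
  obtain ⟨c₀, hc₀, ψ, hψ, hψc⟩ :=
    isCompact_Icc.tendsto_subseq fun n => (⟨(hL n).nonneg s, (hL n).le_one s⟩ : L n s ∈ Icc 0 1)
  have hstep n : MemDP (stepDP (L n s) s) := memDP_stepDP ((hL n).nonneg s) ((hL n).le_one s) hs
  have hFψ : WConv (fun k => F (ψ k)) H0 :=
    wconv_H0_of_one_sub_le (fun k => hF (ψ k))
      (tendsto_one_div_add_atTop_nhds_zero_nat.comp hψ.tendsto_atTop) fun k => hFH0 (ψ k)
  have hw := hc _ _ _ _ (fun k => hF (ψ k)) (fun k => hstep (ψ k)) memDP_H0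
    (memDP_stepDP hc₀.1 hc₀.2 hs) hFψ (wconv_stepDP hψc s)
  rw [htri.star_H0_left (memDP_stepDP hc₀.1 hc₀.2 hs)] at hw
  have hlim := hw t (continuousAt_stepDP hst)
  rw [stepDP, if_pos hst] at hlim
  have hle k : star (F (ψ k)) (stepDP (L (ψ k) s) s) t ≤ L (ψ k) s - ε :=
    (htri.star_mono_right (hF _) (hstep _) (hL _) (fun u => by
      unfold stepDP; split_ifs with h
      exacts [(hL _).monotone h.le, (hL _).nonneg u]) t).trans (hbad (ψ k)).le
  linarith [le_of_tendsto_of_tendsto' hlim (hψc.sub_const ε) hle]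

theorem exists_one_sub_le_star {t ε : ℝ} (ht : 0 < t) (hε : 0 < ε) :
    ∃ δ > (0 : ℝ), ∀ F L, MemDP F → MemDP L → 1 - δ ≤ F δ → 1 - δ ≤ L δ →
      1 - ε ≤ star F L t := by
  obtain ⟨δ, hδ, η, hη, h⟩ := hc.exists_sub_le_star htri (half_pos ht).le (half_lt_self ht)
    (half_pos hε)
  set r := min (min δ η) (min (ε / 2) (t / 2))
  have hrδ : r ≤ δ := by simp [r]
  have hrη : r ≤ η := by simp [r]
  have hrε : r ≤ ε / 2 := by simp [r]
  have hrt : r ≤ t / 2 := by simp [r]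
  refine ⟨r, by positivity, fun F L hF hL hFr hLr => ?_⟩
  have := h F L hF hL (by linarith [hF.monotone hrη])
  linarith [hL.monotone hrt]


theorem wconv_star_H0 (hφ : ∀ n, MemDP (φ n)) (hρ : ∀ n, MemDP (ρ n)) (hφ0 : WConv φ H0)
    (hρ0 : WConv ρ H0) : WConv (fun n => star (φ n) (ρ n)) H0 := by
  simpa only [htri.ident H0 memDP_H0] using hc φ ρ H0 H0 hφ hρ memDP_H0 memDP_H0 hφ0 hρ0

theorem dpLE_of_star_le (hφ : ∀ n, MemDP (φ n)) (hρ : ∀ n, MemDP (ρ n)) (hF : MemDP F)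
    (hL : MemDP L) (hφF : WConv φ F) (hρ0 : WConv ρ H0) (hle : ∀ n, dpLE (star (φ n) (ρ n)) L) :
    dpLE F L := by
  have h := hc φ ρ F H0 hφ hρ hF memDP_H0 hφF hρ0
  rw [htri.ident F hF] at h
  exact h.dpLE (wconv_const L) hF hL hle

end StarCont

section LiminfDP

variable {φ : ℕ → ℝ → ℝ}

noncomputable def liminfDP (φ : ℕ → ℝ → ℝ) : ℝ → ℝ :=
  Function.leftLim fun u => liminf (fun n => φ n u) atTop

theorem isBoundedUnder_ge_of_memDP (hφ : ∀ n, MemDP (φ n)) (u : ℝ) :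
    atTop.IsBoundedUnder (· ≥ ·) fun n => φ n u :=
  isBoundedUnder_of ⟨0, fun n => (hφ n).nonneg u⟩

theorem isCoboundedUnder_ge_of_memDP (hφ : ∀ n, MemDP (φ n)) (u : ℝ) :
    atTop.IsCoboundedUnder (· ≥ ·) fun n => φ n u :=
  isCoboundedUnder_ge_of_le atTop fun n => (hφ n).le_one u

theorem monotone_liminf_of_memDP (hφ : ∀ n, MemDP (φ n)) :
    Monotone fun u => liminf (fun n => φ n u) atTop := fun u v huv =>
  liminf_le_liminf (.of_forall fun n => (hφ n).monotone huv)
    (isBoundedUnder_ge_of_memDP hφ u) (isCoboundedUnder_ge_of_memDP hφ v)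

theorem memDP_liminfDP (hφ : ∀ n, MemDP (φ n)) : MemDP (liminfDP φ) := by
  refine MemDP.leftLim (monotone_liminf_of_memDP hφ)
    (fun u => le_liminf_of_le (isCoboundedUnder_ge_of_memDP hφ u)
      (.of_forall fun n => (hφ n).nonneg u))
    (fun u => liminf_le_of_frequently_le (.of_forall fun n => (hφ n).le_one u)
      (isBoundedUnder_ge_of_memDP hφ u)) fun u hu => ?_
  simp only [(hφ _).eq_zero hu, liminf_const]

theorem wconv_liminfDP (hφ : ∀ n, MemDP (φ n))
    (hcau : ∀ s t, s < t → ∀ ε > (0 : ℝ), ∃ N, ∀ n ≥ N, ∀ p ≥ N, φ n s - ε ≤ φ p t) :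
    WConv φ (liminfDP φ) := by
  have hg := monotone_liminf_of_memDP hφ
  intro t ht
  refine tendsto_order.2 ⟨fun b hb => ?_, fun b hb => ?_⟩
  · exact eventually_lt_of_lt_liminf (hb.trans_le (hg.leftLim_le le_rfl))
      (isBoundedUnder_ge_of_memDP hφ t)
  obtain ⟨t', ht'b, htt' : t < t'⟩ :=
    (((ht.eventually (gt_mem_nhds hb)).filter_mono nhdsWithin_le_nhds).and
      (self_mem_nhdsWithin : Ioi t ∈ 𝓝[>] t)).exists
  obtain ⟨N, hN⟩ := hcau t ((t + t') / 2) (by linarith)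
    ((b - liminfDP φ t') / 2) (by linarith)
  filter_upwards [eventually_ge_atTop N] with n hn
  have hv : φ n t - (b - liminfDP φ t') / 2 ≤ liminf (fun p => φ p ((t + t') / 2)) atTop :=
    le_liminf_of_le (isCoboundedUnder_ge_of_memDP hφ _) (eventually_atTop.2 ⟨N, hN n hn⟩)
  have : _ ≤ liminfDP φ t' := hg.le_leftLim (show (t + t') / 2 < t' by linarith)
  linarith

end LiminfDP

section MetricSpace

variable {G : Type} {D : G → G → ℝ → ℝ} {star : (ℝ → ℝ) → (ℝ → ℝ) → (ℝ → ℝ)}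
  {a : ℕ → G} {f : G → ℝ → ℝ}

theorem IsPMS.dist_self (hD : IsPMS D star) (x : G) : D x x = H0 := (hD.eq_iff x x).2 rfl

theorem PCauchy.wconv (hD : IsPMS D star) (hc : StarCont star) (ha : PCauchy D a) (x : G) :
    WConv (fun n => D (a n) x) (liminfDP fun n => D (a n) x) := by
  refine wconv_liminfDP (fun n => hD.mem _ _) fun s t hst ε hε => ?_
  rcases le_or_gt s 0 with hs | hs
  · exact ⟨0, fun n _ p _ => by linarith [(hD.mem (a n) x).eq_zero hs, (hD.mem (a p) x).nonneg t]⟩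
  obtain ⟨δ, hδ, η, hη, h⟩ := hc.exists_sub_le_star hD.tri hs.le hst hε
  obtain ⟨N, hN⟩ := ha η hη δ hδ
  exact ⟨N, fun n hn p hp => (h _ _ (hD.mem _ _) (hD.mem _ _) (hN p hp n hn)).trans
    (hD.triangle_ineq (a p) (a n) x t)⟩

noncomputable def limDlt (D : G → G → ℝ → ℝ) (a : ℕ → G) : G → ℝ → ℝ :=
  fun x => liminfDP fun n => D (a n) x

theorem lip1_of_wconv (hD : IsPMS D star) (hc : StarCont star) (hf : ∀ x, MemDP (f x))
    (hw : ∀ x, WConv (fun n => D (a n) x) (f x)) : Lip1 D star f := by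
  refine ⟨hf, fun x y => WConv.dpLE (hc _ _ _ _ (fun _ => hD.mem x y) (fun n => hD.mem _ _)
    (hD.mem x y) (hf y) (wconv_const _) (hw y)) (hw x) (hD.tri.mem _ _ (hD.mem x y) (hf y)) (hf x)
    fun n => ?_⟩
  rw [hD.tri.comm _ _ (hD.mem x y) (hD.mem _ _), hD.symm x y]
  exact hD.triangle_ineq (a n) y x

theorem star_le_dist_of_wconv (hD : IsPMS D star) (hc : StarCont star) (hf : ∀ x, MemDP (f x))
    (hw : ∀ x, WConv (fun n => D (a n) x) (f x)) (y z : G) : dpLE (star (f y) (f z)) (D y z) :=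
  WConv.dpLE (hc _ _ _ _ (fun _ => hD.mem _ _) (fun _ => hD.mem _ _) (hf y) (hf z) (hw y) (hw z))
    (wconv_const _) (hD.tri.mem _ _ (hf y) (hf z)) (hD.mem y z) fun n => by
      simpa only [hD.symm (a n) y] using hD.triangle_ineq y (a n) z

theorem wconv_apply_H0 (hD : IsPMS D star) (ha : PCauchy D a) (hf : ∀ x, MemDP (f x))
    (hw : ∀ x, WConv (fun n => D (a n) x) (f x)) : WConv (fun n => f (a n)) H0 := by
  refine (wconv_H0_iff fun n => hf _).2 fun t ht ε hε => ?_
  obtain ⟨N, hN⟩ := ha (t / 2) (half_pos ht) ε hε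
  filter_upwards [eventually_ge_atTop N] with n hn
  obtain ⟨v, hv, hcv⟩ := (hf (a n)).monotone.exists_continuousAt_mem_Ioo (half_lt_self ht)
  refine le_trans (ge_of_tendsto (hw (a n) v hcv) ?_) ((hf (a n)).monotone hv.2.le)
  filter_upwards [eventually_ge_atTop N] with p hp
  exact (hN p hp n hn).trans ((hD.mem _ _).monotone hv.1.le)

theorem PCauchy.inPi_limDlt (hD : IsPMS D star) (hc : StarCont star) (ha : PCauchy D a) :
    InPi D star (limDlt D a) :=
  ⟨lip1_of_wconv hD hc (fun _ => memDP_liminfDP fun _ => hD.mem _ _) (ha.wconv hD hc),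
    a, ha, ha.wconv hD hc⟩

theorem InPi.star_le_dist (hD : IsPMS D star) (hc : StarCont star) (hf : InPi D star f)
    (y z : G) : dpLE (star (f y) (f z)) (D y z) := by
  obtain ⟨hlf, a, -, hw⟩ := hf
  exact star_le_dist_of_wconv hD hc hlf.1 hw y z

theorem pcauchy_const (hD : IsPMS D star) (c : G) : PCauchy D fun _ => c := fun t ht ε hε =>
  ⟨0, fun _ _ _ _ => by simp [hD.dist_self, H0, ht, hε.le]⟩

theorem wconv_dlt (hD : IsPMS D star) (c x : G) : WConv (fun _ => D c x) (dlt D c x) := by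
  simpa only [dlt, hD.symm x c] using wconv_const (D c x)

theorem inPi_dlt (hD : IsPMS D star) (c : G) : InPi D star (dlt D c) :=
  ⟨⟨fun x => hD.mem x c, fun x y => hD.triangle_ineq x y c⟩, _, pcauchy_const hD c, wconv_dlt hD c⟩

theorem InPi.exists_one_sub_le (hD : IsPMS D star) (hf : InPi D star f) {r : ℝ} (hr : 0 < r) :
    ∃ x, 1 - r ≤ f x r := by
  obtain ⟨⟨hfm, -⟩, a, ha, hw⟩ := hf
  obtain ⟨n, hn⟩ :=
    ((wconv_H0_iff fun n => hfm (a n)).1 (wconv_apply_H0 hD ha hfm hw) r hr r hr).exists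
  exact ⟨a n, hn⟩

end MetricSpace

section Group

variable {G : Type} [Group G] {D : G → G → ℝ → ℝ} {star : (ℝ → ℝ) → (ℝ → ℝ) → (ℝ → ℝ)}
  {a b : ℕ → G} {f g h : G → ℝ → ℝ}

theorem IsPIMG.dist_inv_inv (hD : IsPIMG D star) (x y : G) : D x⁻¹ y⁻¹ = D y x := by
  rw [← hD.invL x⁻¹ y⁻¹ x, mul_inv_cancel, ← hD.invR 1 (x * y⁻¹) y, one_mul,
    inv_mul_cancel_right]

theorem IsPIMG.dist_mul_inv_mul_inv (hD : IsPIMG D star) (x y z : G) :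
    D (x * y⁻¹) (x * z⁻¹) = D y z := by
  rw [hD.invL, hD.dist_inv_inv, hD.symm]

theorem PCauchy.mul (hD : IsPIMG D star) (hc : StarCont star) (ha : PCauchy D a)
    (hb : PCauchy D b) : PCauchy D fun n => a n * b n := by
  intro t ht ε hε
  obtain ⟨δ, hδ, h⟩ := hc.exists_one_sub_le_star hD.tri ht hε
  obtain ⟨N₁, hN₁⟩ := ha δ hδ δ hδ
  obtain ⟨N₂, hN₂⟩ := hb δ hδ δ hδ
  refine ⟨max N₁ N₂, fun n hn p hp => ?_⟩
  have htri := hD.triangle_ineq (a n * b n) (a p * b n) (a p * b p) t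
  rw [hD.invR, hD.invL] at htri
  exact (h _ _ (hD.mem _ _) (hD.mem _ _) (hN₁ n (le_of_max_le_left hn) p (le_of_max_le_left hp))
    (hN₂ n (le_of_max_le_right hn) p (le_of_max_le_right hp))).trans htri

theorem PCauchy.inv (hD : IsPIMG D star) (ha : PCauchy D a) : PCauchy D fun n => (a n)⁻¹ :=
  fun t ht ε hε => (ha t ht ε hε).imp fun _ hN n hn p hp => by
    simpa only [hD.dist_inv_inv] using hN p hp n hn

theorem memDP_sconv (htri : IsTriangle star) (hf : ∀ x, MemDP (f x)) (hg : ∀ x, MemDP (g x))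
    (x : G) : MemDP (sconv star f g x) :=
  MemDP.iSup fun _ => htri.mem _ _ (hf _) (hg _)

theorem le_sconv (htri : IsTriangle star) (hf : ∀ x, MemDP (f x)) (hg : ∀ x, MemDP (g x))
    (x y : G) (t : ℝ) : star (f (x * y⁻¹)) (g y) t ≤ sconv star f g x t :=
  le_ciSup (f := fun y => star (f (x * y⁻¹)) (g y) t)
    ⟨1, forall_mem_range.2 fun _ => (htri.mem _ _ (hf _) (hg _)).le_one t⟩ y

theorem le_sconv_mul (htri : IsTriangle star) (hf : ∀ x, MemDP (f x)) (hg : ∀ x, MemDP (g x))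
    (x y : G) : dpLE (star (f x) (g y)) (sconv star f g (x * y)) := fun t => by
  simpa only [mul_inv_cancel_right] using le_sconv htri hf hg (x * y) y t

theorem sconv_eq_of_wconv (hD : IsPIMG D star) (hc : StarCont star) (ha : PCauchy D a)
    (hb : PCauchy D b) (hf : Lip1 D star f) (hg : Lip1 D star g) (hh : ∀ x, MemDP (h x))
    (hwf : ∀ x, WConv (fun n => D (a n) x) (f x)) (hwg : ∀ x, WConv (fun n => D (b n) x) (g x))
    (hwh : ∀ x, WConv (fun n => D (a n * b n) x) (h x)) : sconv star f g = h := by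
  have htri := hD.tri
  funext x
  refine funext fun t => le_antisymm (ciSup_le fun y => ?_) ?_
  · refine WConv.dpLE (hc _ _ _ _ (fun _ => hD.mem _ _) (fun _ => hD.mem _ _) (hf.1 _) (hg.1 _)
      (hwf _) (hwg y)) (hwh x) (htri.mem _ _ (hf.1 _) (hg.1 _)) (hh x) (fun n => ?_) t
    rw [← hD.invR (a n) (x * y⁻¹) (b n), ← hD.invL (b n) y (x * y⁻¹), inv_mul_cancel_right]
    exact hD.triangle_ineq _ _ _
  -- Conversely, perturb by `f (a n) ⋆ g (b n) → H0` and use that `f` is 1-Lipschitz.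
  have hρ n : MemDP (star (f (a n)) (g (b n))) := htri.mem _ _ (hf.1 _) (hg.1 _)
  refine hc.dpLE_of_star_le htri (fun _ => hD.mem _ _) hρ (hh x)
    (memDP_sconv htri hf.1 hg.1 x) (hwh x) (hc.wconv_star_H0 htri (fun _ => hf.1 _)
      (fun _ => hg.1 _) (wconv_apply_H0 hD.toIsPMS ha hf.1 hwf)
      (wconv_apply_H0 hD.toIsPMS hb hg.1 hwg)) (fun n s => ?_) t
  have hlip : dpLE (star (D (a n * b n) x) (f (a n))) (f (x * (b n)⁻¹)) := by
    simpa only [← hD.invR (x * (b n)⁻¹) (a n) (b n), inv_mul_cancel_right, hD.symm x]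
      using hf.2 (x * (b n)⁻¹) (a n)
  rw [htri.assoc _ _ _ (hD.mem _ _) (hf.1 _) (hg.1 _)]
  exact (htri.mono _ _ _ (htri.mem _ _ (hD.mem _ _) (hf.1 _)) (hf.1 _) (hg.1 _) hlip s).trans
    (le_sconv htri hf.1 hg.1 x (b n) s)

end Group

section DD

variable {G : Type} {D : G → G → ℝ → ℝ} {star : (ℝ → ℝ) → (ℝ → ℝ) → (ℝ → ℝ)}
  {f g k : G → ℝ → ℝ}

theorem memDP_DD [Nonempty G] (htri : IsTriangle star) (hf : ∀ x, MemDP (f x))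
    (hg : ∀ x, MemDP (g x)) : MemDP (DD star f g) :=
  MemDP.iSup fun x => htri.mem _ _ (hf x) (hg x)

theorem le_DD (htri : IsTriangle star) (hf : ∀ x, MemDP (f x)) (hg : ∀ x, MemDP (g x))
    (x : G) : dpLE (star (f x) (g x)) (DD star f g) := fun t =>
  le_ciSup (f := fun x => star (f x) (g x) t)
    ⟨1, forall_mem_range.2 fun x => (htri.mem _ _ (hf x) (hg x)).le_one t⟩ x

theorem DD_comm (htri : IsTriangle star) (hf : ∀ x, MemDP (f x)) (hg : ∀ x, MemDP (g x)) :
    DD star f g = DD star g f := by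
  unfold DD
  simp only [htri.comm _ _ (hf _) (hg _)]

theorem SupCont.star_iSup_le (hsc : SupCont star) (htri : IsTriangle star) {I J : Type}
    [Nonempty I] [Nonempty J] {F : I → ℝ → ℝ} {L : J → ℝ → ℝ} (hF : ∀ i, MemDP (F i))
    (hL : ∀ j, MemDP (L j)) {t c : ℝ} (h : ∀ i j, star (F i) (L j) t ≤ c) :
    star (fun s => ⨆ i, F i s) (fun s => ⨆ j, L j s) t ≤ c := by
  rw [← hsc I ‹_› F _ hF (MemDP.iSup hL)]
  refine ciSup_le fun i => ?_
  rw [htri.comm _ _ (hF i) (MemDP.iSup hL), ← hsc J ‹_› L _ hL (hF i)]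
  exact ciSup_le fun j => htri.comm _ _ (hL j) (hF i) ▸ h i j

theorem Lip1.star_star_le (hD : IsPMS D star) (hg : Lip1 D star g) {φ ρ : ℝ → ℝ} (hφ : MemDP φ)
    (hρ : MemDP ρ) {u v : G} (hρD : dpLE ρ (D u v)) :
    dpLE (star (star φ (g v)) ρ) (star φ (g u)) := by
  have htri := hD.tri
  refine fun t => (htri.star_mono_right (htri.mem _ _ hφ (hg.1 v)) hρ (hD.mem u v) hρD t).trans ?_
  rw [← htri.assoc _ _ _ hφ (hg.1 v) (hD.mem u v), htri.comm _ _ (hg.1 v) (hD.mem u v)]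
  exact htri.star_mono_right hφ (htri.mem _ _ (hD.mem u v) (hg.1 v)) (hg.1 u) (hg.2 u v) t

theorem DD_triangle [Nonempty G] (hD : IsPMS D star) (hsc : SupCont star) (hf : ∀ x, MemDP (f x))
    (hg : ∀ x, MemDP (g x)) (hk : Lip1 D star k) (hsharp : ∀ y z, dpLE (star (g y) (g z)) (D y z)) :
    dpLE (star (DD star f g) (DD star g k)) (DD star f k) := by
  have htri := hD.tri
  refine fun t => hsc.star_iSup_le htri (fun x => htri.mem _ _ (hf x) (hg x))
    (fun z => htri.mem _ _ (hg z) (hk.1 z)) fun x z => ?_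
  rw [htri.comm (g z) _ (hg z) (hk.1 z), htri.star_star_star_comm (hf x) (hg x) (hk.1 z) (hg z)]
  exact (hk.star_star_le hD (hf x) (htri.mem _ _ (hg x) (hg z)) (hsharp x z) t).trans
    (le_DD htri hf hk.1 x t)

theorem DD_le_of_star_le [Nonempty G] (hc : StarCont star) (htri : IsTriangle star)
    (hf : ∀ x, MemDP (f x)) (hg : ∀ x, MemDP (g x)) {ρ : ℕ → ℝ → ℝ} (hρ : ∀ n, MemDP (ρ n))
    (hρ0 : WConv ρ H0) {L : ℝ → ℝ} (hL : MemDP L)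
    (hle : ∀ x n, dpLE (star (star (f x) (g x)) (ρ n)) L) :
    dpLE (DD star f g) L := fun t =>
  ciSup_le fun x => hc.dpLE_of_star_le htri (fun _ => htri.mem _ _ (hf x) (hg x)) hρ
    (htri.mem _ _ (hf x) (hg x)) hL (wconv_const _) hρ0 (hle x) t

theorem apply_le_DD_dlt (hD : IsPMS D star) (hf : ∀ x, MemDP (f x)) (u : G) :
    dpLE (f u) (DD star f (dlt D u)) := by
  have h := le_DD hD.tri hf (g := dlt D u) (hD.mem · u) u
  rwa [show dlt D u u = H0 from hD.dist_self u, hD.tri.ident _ (hf u)] at h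

theorem DD_dlt_le [Nonempty G] (hD : IsPMS D star) (u v : G) :
    dpLE (DD star (dlt D u) (dlt D v)) (D u v) :=
  fun t => ciSup_le fun x => by simpa only [dlt, hD.symm x u] using hD.triangle_ineq u x v t

end DD

section PiGroup

variable {G : Type} [Group G] {D : G → G → ℝ → ℝ} {star : (ℝ → ℝ) → (ℝ → ℝ) → (ℝ → ℝ)}
  {f g k : G → ℝ → ℝ}

theorem inPi_sconv (hD : IsPIMG D star) (hc : StarCont star) (hf : InPi D star f)
    (hg : InPi D star g) : InPi D star (sconv star f g) := by
  obtain ⟨hlf, a, ha, hwf⟩ := hf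
  obtain ⟨hlg, b, hb, hwg⟩ := hg
  have hab := ha.mul hD hc hb
  rw [sconv_eq_of_wconv hD hc ha hb hlf hlg (hab.inPi_limDlt hD.toIsPMS hc).1.1 hwf hwg
    (hab.wconv hD.toIsPMS hc)]
  exact hab.inPi_limDlt hD.toIsPMS hc

theorem InPi.sconv_dlt_one (hD : IsPIMG D star) (hc : StarCont star) (hf : InPi D star f) :
    sconv star f (dlt D 1) = f ∧ sconv star (dlt D 1) f = f := by
  obtain ⟨hlf, a, ha, hwf⟩ := hf
  have h1 := inPi_dlt hD.toIsPMS (1 : G)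
  exact ⟨sconv_eq_of_wconv hD hc ha (pcauchy_const hD.toIsPMS 1) hlf h1.1 hlf.1 hwf
      (wconv_dlt hD.toIsPMS 1) (by simpa only [mul_one] using hwf),
    sconv_eq_of_wconv hD hc (pcauchy_const hD.toIsPMS 1) ha h1.1 hlf hlf.1
      (wconv_dlt hD.toIsPMS 1) hwf (by simpa only [one_mul] using hwf)⟩

theorem InPi.exists_sconv_eq_dlt_one (hD : IsPIMG D star) (hc : StarCont star)
    (hf : InPi D star f) : ∃ g, InPi D star g ∧
      sconv star f g = dlt D 1 ∧ sconv star g f = dlt D 1 := by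
  obtain ⟨hlf, a, ha, hwf⟩ := hf
  have ha' := ha.inv hD
  have hg := ha'.inPi_limDlt hD.toIsPMS hc
  have h1 := (inPi_dlt hD.toIsPMS (1 : G)).1.1
  have hw1 : ∀ x, WConv (fun _ => D 1 x) (dlt D 1 x) := wconv_dlt hD.toIsPMS 1
  refine ⟨limDlt D fun n => (a n)⁻¹, hg, ?_, ?_⟩
  · exact sconv_eq_of_wconv hD hc ha ha' hlf hg.1 h1 hwf (ha'.wconv hD.toIsPMS hc)
      (by simpa only [mul_inv_cancel] using hw1)
  · exact sconv_eq_of_wconv hD hc ha' ha hg.1 hlf h1 (ha'.wconv hD.toIsPMS hc) hwf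
      (by simpa only [inv_mul_cancel] using hw1)

theorem DD_sconv_right (hD : IsPIMG D star) (hc : StarCont star) (hsc : SupCont star)
    (hf : ∀ x, MemDP (f x)) (hg : Lip1 D star g) (hk : InPi D star k) :
    DD star (sconv star f k) (sconv star g k) = DD star f g := by
  have htri := hD.tri
  have hfk := memDP_sconv htri hf hk.1.1
  have hgk := memDP_sconv htri hg.1 hk.1.1
  obtain ⟨⟨hkm, -⟩, c, hcc, hwk⟩ := hk
  refine funext fun t => le_antisymm (ciSup_le fun x => hsc.star_iSup_le htri
    (fun y => htri.mem _ _ (hf _) (hkm y)) (fun z => htri.mem _ _ (hg.1 _) (hkm z))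
      fun y z => ?_) ?_
  · rw [htri.star_star_star_comm (hf _) (hkm y) (hg.1 _) (hkm z)]
    refine (hg.star_star_le hD.toIsPMS (hf _) (htri.mem _ _ (hkm y) (hkm z)) ?_ t).trans
      (le_DD htri hf hg.1 _ t)
    rw [hD.dist_mul_inv_mul_inv]
    exact star_le_dist_of_wconv hD.toIsPMS hc hkm hwk y z
  have hkc := wconv_apply_H0 hD.toIsPMS hcc hkm hwk
  refine DD_le_of_star_le hc htri hf hg.1 (fun n => htri.mem _ _ (hkm _) (hkm _))
    (hc.wconv_star_H0 htri (fun _ => hkm _) (fun _ => hkm _) hkc hkc) (memDP_DD htri hfk hgk)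
    (fun x n s => ?_) t
  rw [htri.star_star_star_comm (hf x) (hg.1 x) (hkm _) (hkm _)]
  exact (htri.star_mono (htri.mem _ _ (hf x) (hkm _)) (htri.mem _ _ (hg.1 x) (hkm _)) (hfk _)
    (hgk _) (le_sconv_mul htri hf hkm x (c n)) (le_sconv_mul htri hg.1 hkm x (c n)) s).trans
    (le_DD htri hfk hgk _ s)

theorem DD_sconv_left (hD : IsPIMG D star) (hc : StarCont star) (hsc : SupCont star)
    (hf : ∀ x, MemDP (f x)) (hg : Lip1 D star g) (hk : InPi D star k) :
    DD star (sconv star k f) (sconv star k g) = DD star f g := by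
  have htri := hD.tri
  have hkf := memDP_sconv htri hk.1.1 hf
  have hkg := memDP_sconv htri hk.1.1 hg.1
  obtain ⟨⟨hkm, -⟩, c, hcc, hwk⟩ := hk
  refine funext fun t => le_antisymm (ciSup_le fun x => hsc.star_iSup_le htri
    (fun y => htri.mem _ _ (hkm _) (hf y)) (fun z => htri.mem _ _ (hkm _) (hg.1 z))
      fun y z => ?_) ?_
  · rw [htri.star_star_star_comm (hkm _) (hf y) (hkm _) (hg.1 z),
      htri.comm _ _ (htri.mem _ _ (hkm _) (hkm _)) (htri.mem _ _ (hf y) (hg.1 z))]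
    refine (hg.star_star_le hD.toIsPMS (hf y) (htri.mem _ _ (hkm _) (hkm _)) ?_ t).trans
      (le_DD htri hf hg.1 y t)
    rw [← hD.dist_mul_inv_mul_inv x]
    exact star_le_dist_of_wconv hD.toIsPMS hc hkm hwk _ _
  have hkc := wconv_apply_H0 hD.toIsPMS hcc hkm hwk
  refine DD_le_of_star_le hc htri hf hg.1 (fun n => htri.mem _ _ (hkm _) (hkm _))
    (hc.wconv_star_H0 htri (fun _ => hkm _) (fun _ => hkm _) hkc hkc) (memDP_DD htri hkf hkg)
    (fun x n s => ?_) t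
  rw [htri.comm _ _ (htri.mem _ _ (hf x) (hg.1 x)) (htri.mem _ _ (hkm _) (hkm _)),
    ← htri.star_star_star_comm (hkm _) (hf x) (hkm _) (hg.1 x)]
  exact (htri.star_mono (htri.mem _ _ (hkm _) (hf x)) (htri.mem _ _ (hkm _) (hg.1 x)) (hkf _)
    (hkg _) (le_sconv_mul htri hkm hf (c n) x) (le_sconv_mul htri hkm hg.1 (c n) x) s).trans
    (le_DD htri hkf hkg _ s)

end PiGroup

section Completeness

variable {G : Type} [Nonempty G] {D : G → G → ℝ → ℝ} {star : (ℝ → ℝ) → (ℝ → ℝ) → (ℝ → ℝ)}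
  {F : ℕ → G → ℝ → ℝ} {b : ℕ → G}

theorem pcauchy_of_DD (hD : IsPMS D star) (hc : StarCont star) (hsc : SupCont star)
    (hF : ∀ n, InPi D star (F n))
    (hcau : ∀ t > (0 : ℝ), ∀ ε > (0 : ℝ), ∃ N, ∀ n ≥ N, ∀ m ≥ N, 1 - ε ≤ DD star (F n) (F m) t)
    (hb : WConv (fun n => DD star (F n) (dlt D (b n))) H0) : PCauchy D b := by
  have htri := hD.tri
  have hFm n := (hF n).1.1
  have hdm (u : G) : ∀ x, MemDP (dlt D u x) := (hD.mem · u)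
  have hbm n : MemDP (DD star (F n) (dlt D (b n))) := memDP_DD htri (hFm n) (hdm _)
  intro t ht ε hε
  obtain ⟨δ₁, hδ₁, h₁⟩ := hc.exists_one_sub_le_star htri ht hε
  obtain ⟨δ₂, hδ₂, h₂⟩ := hc.exists_one_sub_le_star htri hδ₁ hδ₁
  obtain ⟨N₀, hN₀⟩ := hcau δ₂ hδ₂ δ₂ hδ₂
  obtain ⟨N, hN⟩ := eventually_atTop.1 <|
    ((wconv_H0_iff hbm).1 hb δ₁ hδ₁ δ₁ hδ₁).and ((wconv_H0_iff hbm).1 hb δ₂ hδ₂ δ₂ hδ₂)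
  refine ⟨max N N₀, fun n hn p hp => ?_⟩
  have hC := memDP_DD htri (hFm n) (hFm p)
  have hnp := memDP_DD htri (hFm n) (hdm (b p))
  have hvia_p : dpLE (star (DD star (F n) (F p)) (DD star (F p) (dlt D (b p))))
      (DD star (F n) (dlt D (b p))) :=
    DD_triangle hD hsc (hFm n) (hFm p) (inPi_dlt hD (b p)).1 ((hF p).star_le_dist hD hc)
  have hvia_n : dpLE (star (DD star (F n) (dlt D (b n))) (DD star (F n) (dlt D (b p))))
      (D (b n) (b p)) := by
    rw [DD_comm htri (hFm n) (hdm _)]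
    exact fun s => DD_triangle hD hsc (hdm _) (hFm n) (inPi_dlt hD (b p)).1
      ((hF n).star_le_dist hD hc) s |>.trans (DD_dlt_le hD _ _ s)
  have hinner := h₂ _ _ hC (hbm p) (hN₀ n (le_of_max_le_right hn) p (le_of_max_le_right hp))
    (hN p (le_of_max_le_left hp)).2
  calc 1 - ε ≤ star (DD star (F n) (dlt D (b n)))
        (star (DD star (F n) (F p)) (DD star (F p) (dlt D (b p)))) t :=
        h₁ _ _ (hbm n) (htri.mem _ _ hC (hbm p)) (hN n (le_of_max_le_left hn)).1 hinner
    _ ≤ star (DD star (F n) (dlt D (b n))) (DD star (F n) (dlt D (b p))) t :=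
        htri.star_mono_right (hbm n) (htri.mem _ _ hC (hbm p)) hnp hvia_p t
    _ ≤ D (b n) (b p) t := hvia_n t

theorem wconv_DD_limDlt (hD : IsPMS D star) (hc : StarCont star) (hsc : SupCont star)
    (hF : ∀ n, InPi D star (F n)) (hb : WConv (fun n => DD star (F n) (dlt D (b n))) H0)
    (hbc : PCauchy D b) : WConv (fun n => DD star (F n) (limDlt D b)) H0 := by
  have htri := hD.tri
  have hFm n := (hF n).1.1
  have hdm (u : G) : ∀ x, MemDP (dlt D u x) := (hD.mem · u)
  have hf := hbc.inPi_limDlt hD hc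
  have hbf n : MemDP (DD star (dlt D (b n)) (limDlt D b)) := memDP_DD htri (hdm _) hf.1.1
  have hfb : WConv (fun n => DD star (dlt D (b n)) (limDlt D b)) H0 :=
    wconv_H0_of_le (fun n => hf.1.1 (b n)) hbf (wconv_apply_H0 hD hbc hf.1.1 (hbc.wconv hD hc))
      fun n => by rw [DD_comm htri (hdm _) hf.1.1]; exact apply_le_DD_dlt hD hf.1.1 (b n)
  exact wconv_H0_of_le (fun n => htri.mem _ _ (memDP_DD htri (hFm n) (hdm _)) (hbf n))
    (fun n => memDP_DD htri (hFm n) hf.1.1)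
    (hc.wconv_star_H0 htri (fun n => memDP_DD htri (hFm n) (hdm _)) hbf hb hfb)
    fun n => DD_triangle hD hsc (hFm n) (hdm _) hf.1 ((inPi_dlt hD (b n)).star_le_dist hD hc)

theorem exists_inPi_wconv_DD (hD : IsPMS D star) (hc : StarCont star) (hsc : SupCont star)
    (hF : ∀ n, InPi D star (F n))
    (hcau : ∀ t > (0 : ℝ), ∀ ε > (0 : ℝ), ∃ N, ∀ n ≥ N, ∀ m ≥ N, 1 - ε ≤ DD star (F n) (F m) t) :
    ∃ f, InPi D star f ∧ WConv (fun n => DD star (F n) f) H0 := by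
  choose b hb using fun n : ℕ => (hF n).exists_one_sub_le hD (Nat.one_div_pos_of_nat (n := n))
  have hbF : WConv (fun n => DD star (F n) (dlt D (b n))) H0 :=
    wconv_H0_of_le (fun n => (hF n).1.1 (b n))
      (fun n => memDP_DD hD.tri (hF n).1.1 (hD.mem · (b n)))
      (wconv_H0_of_one_sub_le (fun n => (hF n).1.1 (b n))
        tendsto_one_div_add_atTop_nhds_zero_nat hb)
      fun n => apply_le_DD_dlt hD (hF n).1.1 (b n)
  have hbc := pcauchy_of_DD hD hc hsc hF hcau hbF
  exact ⟨limDlt D b, hbc.inPi_limDlt hD hc, wconv_DD_limDlt hD hc hsc hF hbF hbc⟩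

end Completeness

/-- (Π(G), ⊙, 𝔻, ⋆) is a probabilistic invariant complete metric
group with identity δ_e. -/
theorem stmt15 {G : Type} [Group G] (D : G → G → ℝ → ℝ)
    (star : (ℝ → ℝ) → (ℝ → ℝ) → (ℝ → ℝ)) (h : IsPIMG D star)
    (hc : StarCont star) (hsc : SupCont star) :
    (∀ f g, InPi D star f → InPi D star g → InPi D star (sconv star f g)) ∧
    (∀ f, InPi D star f →
      sconv star f (dlt D 1) = f ∧ sconv star (dlt D 1) f = f) ∧
    (∀ f, InPi D star f → ∃ g, InPi D star g ∧
      sconv star f g = dlt D 1 ∧ sconv star g f = dlt D 1) ∧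
    (∀ f g k, InPi D star f → InPi D star g → InPi D star k →
      DD star (sconv star f k) (sconv star g k) = DD star f g ∧
      DD star (sconv star k f) (sconv star k g) = DD star f g) ∧
    (∀ F : ℕ → G → ℝ → ℝ, (∀ n, InPi D star (F n)) →
      (∀ t > (0:ℝ), ∀ ε > (0:ℝ), ∃ N, ∀ n ≥ N, ∀ m ≥ N,
        1 - ε ≤ DD star (F n) (F m) t) →
      ∃ f, InPi D star f ∧ WConv (fun n => DD star (F n) f) H0) :=
  ⟨fun _ _ hf hg => inPi_sconv h hc hf hg,
    fun _ hf => hf.sconv_dlt_one h hc,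
    fun _ hf => hf.exists_sconv_eq_dlt_one h hc,
    fun _ _ _ hf hg hk =>
      ⟨DD_sconv_right h hc hsc hf.1.1 hg.1 hk, DD_sconv_left h hc hsc hf.1.1 hg.1 hk⟩,
    fun _ hF hcau => exists_inPi_wconv_DD h.toIsPMS hc hsc hF hcau⟩
end

section
/- For any left-continuous t-norm T, the distribution H_0 is the only invertible element of the monoid (Δ⁺, ⋆_T): if L ⋆_T K = H_0 for L, K ∈ Δ⁺, then L = K = H_0. -/
open Filter Topology Set

/-
Both factors dominate the product: `(L ⋆_T K)(t) ≤ L(t)` and `(L ⋆_T K)(t) ≤ K(t)`, because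
`T(L s, K (t - s))` is bounded by whichever argument sits at a point `≤ t`, while the other
argument vanishes when `s < 0` or `s > t`. So `L ⋆_T K = H₀` forces `H₀ ≤ L` and `H₀ ≤ K`, and a
distribution function above `H₀` is `H₀`.
-/

namespace IsTnorm

variable {T : ℝ → ℝ → ℝ}

theorem le_left (hT : IsTnorm T) {x y : ℝ} (hx : x ∈ Icc (0 : ℝ) 1) (hy : y ≤ 1) :
    T x y ≤ x :=
  (hT.mono x y 1 hy).trans_eq (hT.one x hx)

theorem le_right (hT : IsTnorm T) {x y : ℝ} (hx : x ≤ 1) (hy : y ∈ Icc (0 : ℝ) 1) :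
    T x y ≤ y :=
  hT.comm x y ▸ hT.le_left hy hx

end IsTnorm

namespace MemDP

variable {f : ℝ → ℝ}

theorem mem_Icc (hf : MemDP f) (t : ℝ) : f t ∈ Icc (0 : ℝ) 1 :=
  ⟨hf.2.1 t, hf.2.2.1 t⟩

theorem eq_H0_of_dpLE (hf : MemDP f) (h : dpLE H0 f) : f = H0 := by
  funext t
  by_cases ht : 0 < t
  · have := h t
    simp only [H0, if_pos ht] at this ⊢
    exact le_antisymm (hf.2.2.1 t) this
  · simpa [H0, ht] using hf.2.2.2.2 t (not_lt.mp ht)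

end MemDP

section starT

variable {T : ℝ → ℝ → ℝ} {L K : ℝ → ℝ}

theorem starT_le_left (hT : IsTnorm T) (hL : MemDP L) (hK : MemDP K) (t : ℝ) :
    starT T L K t ≤ L t := by
  refine ciSup_le fun s => ?_
  rcases le_or_gt s t with hst | hts
  · exact (hT.le_left (hL.mem_Icc s) (hK.mem_Icc _).2).trans (hL.1 hst)
  · calc T (L s) (K (t - s)) ≤ K (t - s) := hT.le_right (hL.mem_Icc s).2 (hK.mem_Icc _)
      _ = 0 := hK.2.2.2.2 _ (by linarith)
      _ ≤ L t := (hL.mem_Icc t).1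

theorem starT_le_right (hT : IsTnorm T) (hL : MemDP L) (hK : MemDP K) (t : ℝ) :
    starT T L K t ≤ K t := by
  refine ciSup_le fun s => ?_
  rcases le_or_gt 0 s with hs | hs
  · exact (hT.le_right (hL.mem_Icc s).2 (hK.mem_Icc _)).trans (hK.1 (by linarith))
  · calc T (L s) (K (t - s)) ≤ L s := hT.le_left (hL.mem_Icc s) (hK.mem_Icc _).2
      _ = 0 := hL.2.2.2.2 s hs.le
      _ ≤ K t := (hK.mem_Icc t).1

end starT

theorem stmt17_general (T : ℝ → ℝ → ℝ) (hT : IsTnorm T)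
    (L K : ℝ → ℝ) (hL : MemDP L) (hK : MemDP K)
    (hinv : starT T L K = H0) : L = H0 ∧ K = H0 :=
  ⟨hL.eq_H0_of_dpLE fun t => hinv ▸ starT_le_left hT hL hK t,
    hK.eq_H0_of_dpLE fun t => hinv ▸ starT_le_right hT hL hK t⟩

/-- H₀ is the only invertible element of (Δ⁺, ⋆_T). -/
theorem stmt17 (T : ℝ → ℝ → ℝ) (hT : IsTnorm T) (hlc : LeftCtsTnorm T)
    (L K : ℝ → ℝ) (hL : MemDP L) (hK : MemDP K)
    (hinv : starT T L K = H0) : L = H0 ∧ K = H0 :=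
  stmt17_general T hT L K hL hK hinv
end
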